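/- arXiv:2405.09736 — 3 statements merged into one kernel-verified Lean document; each statement's English description precedes it below -/
import Mathlib

section
/- Let n ∈ ℤ with |n| ≥ 2, let 𝔓 be a non-empty set of primes, let u ∈ ℤ with u ≥ 2, and suppose |n^u − 1| ∉ Ξ(n,𝔓). Then there exist v,w ∈ ℤ such that: (i) for all x,y ∈ ℤ≥0, the integer n^u − 1 does not divide v·n^x − w·n^y; and (ii) for every s ∈ Ξ(n,𝔓) there exist x,y ∈ ℤ≥0 with gcd(n^u − 1, s) dividing v·n^x − w·n^y. -/
/-- The Baumslag–Solitar relations for `BS(m,n)`: one relation `t⁻¹ aᵐ t a⁻ⁿ`. -/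
def BSrels (m n : ℤ) : Set (FreeGroup Bool) :=
  {(FreeGroup.of true)⁻¹ * (FreeGroup.of false) ^ m * FreeGroup.of true *
    (FreeGroup.of false) ^ (-n)}

/-- The Baumslag–Solitar group `BS(m,n) = ⟨a, t ∣ t⁻¹ aᵐ t = aⁿ⟩`. -/
def BS (m n : ℤ) : Type := PresentedGroup (BSrels m n)

instance (m n : ℤ) : Group (BS m n) :=
  inferInstanceAs (Group (PresentedGroup (BSrels m n)))

/-- The generator `a` of `BS(m,n)`. -/
def BSa (m n : ℤ) : BS m n := PresentedGroup.of false

/-- The generator `t` of `BS(m,n)`. -/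
def BSt (m n : ℤ) : BS m n := PresentedGroup.of true

/-- The relations of `H(n,r,s)`: `t⁻¹ a t a⁻ⁿ`, `tʳ`, `aˢ`. -/
def Hrels (n r s : ℤ) : Set (FreeGroup Bool) :=
  {(FreeGroup.of true)⁻¹ * FreeGroup.of false * FreeGroup.of true * (FreeGroup.of false) ^ (-n),
   (FreeGroup.of true) ^ r, (FreeGroup.of false) ^ s}

/-- The group `H(n,r,s) = ⟨a, t ∣ t⁻¹ a t = aⁿ, tʳ = 1, aˢ = 1⟩`. -/
def Hgrp (n r s : ℤ) : Type := PresentedGroup (Hrels n r s)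

instance (n r s : ℤ) : Group (Hgrp n r s) :=
  inferInstanceAs (Group (PresentedGroup (Hrels n r s)))

/-- The generator `a` of `H(n,r,s)`. -/
def Ha (n r s : ℤ) : Hgrp n r s := PresentedGroup.of false

/-- The generator `t` of `H(n,r,s)`. -/
def Ht (n r s : ℤ) : Hgrp n r s := PresentedGroup.of true

/-- A class of groups: a predicate on (Type-0) groups. -/
def GroupClass : Type 1 := ∀ (G : Type) [Group G], Prop

/-- A class of groups consists only of periodic (torsion) groups. -/
def PeriodicClass (C : GroupClass) : Prop :=
  ∀ (G : Type) [Group G], C G → ∀ g : G, IsOfFinOrder g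

/-- `C` is a root class: closed under isomorphism, contains a non-trivial group, closed under
subgroups, extensions and unrestricted direct products `∏_{y ∈ Y} X` with `X, Y ∈ C`. -/
structure IsRootClass (C : GroupClass) : Prop where
  iso_closed : ∀ (G H : Type) [Group G] [Group H], (G ≃* H) → C G → C H
  has_nontrivial : ∃ (G : Type) (_ : Group G), C G ∧ Nontrivial G
  subgroup_closed : ∀ (G : Type) [Group G] (H : Subgroup G), C G → C H
  extension_closed : ∀ (G : Type) [Group G] (N : Subgroup G) [N.Normal],
    C N → C (G ⧸ N) → C G
  pi_closed : ∀ (X Y : Type) [Group X] [Group Y], C X → C Y → C (Y → X)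

/-- `𝔓(C)`: the set of primes dividing the order of some element of some group in `C`. -/
def PrimesOf (C : GroupClass) : Set ℕ :=
  {p | p.Prime ∧ ∃ (G : Type) (_ : Group G), C G ∧ ∃ g : G, p ∣ orderOf g}

/-- A natural number is a `P`-number: all its prime divisors lie in `P`. -/
def IsPNat (P : Set ℕ) (k : ℕ) : Prop := ∀ p : ℕ, p.Prime → p ∣ k → p ∈ P

/-- An integer is a `P`-number: all its prime divisors lie in `P`. -/
def IsPInt (P : Set ℕ) (k : ℤ) : Prop := ∀ p : ℕ, p.Prime → (p : ℤ) ∣ k → p ∈ P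

/-- The class `𝓕_P` of finite groups whose order is a `P`-number. -/
def FClass (P : Set ℕ) (G : Type) [Group G] : Prop :=
  Finite G ∧ IsPNat P (Nat.card G)

/-- The class `𝓕𝓢_P` of finite solvable groups whose order is a `P`-number. -/
def FSClass (P : Set ℕ) (G : Type) [Group G] : Prop :=
  Finite G ∧ IsSolvable G ∧ IsPNat P (Nat.card G)

/-- `X` is conjugacy `C`-separable. -/
def ConjSep (C : GroupClass) (X : Type) [Group X] : Prop :=
  ∀ x y : X, ¬IsConj x y →
    ∃ (G : Type) (_ : Group G), C G ∧
      ∃ σ : X →* G, Function.Surjective σ ∧ ¬IsConj (σ x) (σ y)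

/-- `X` is residually a `C`-group. -/
def ResiduallyIn (C : GroupClass) (X : Type) [Group X] : Prop :=
  ∀ x y : X, x ≠ y →
    ∃ (G : Type) (_ : Group G), C G ∧
      ∃ σ : X →* G, Function.Surjective σ ∧ σ x ≠ σ y

/-- `X` is residually finite. -/
def ResiduallyFinite (X : Type) [Group X] : Prop :=
  ∀ x y : X, x ≠ y →
    ∃ (G : Type) (_ : Group G), Finite G ∧
      ∃ σ : X →* G, Function.Surjective σ ∧ σ x ≠ σ y

/-- `X` is conjugacy (finite) separable. -/
def ConjugacySeparable (X : Type) [Group X] : Prop :=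
  ∀ x y : X, ¬IsConj x y →
    ∃ (G : Type) (_ : Group G), Finite G ∧
      ∃ σ : X →* G, Function.Surjective σ ∧ ¬IsConj (σ x) (σ y)

/-- `Ξ(n,P)`: positive `P`-numbers `s` such that `n ^ r ≡ 1 (mod s)` for some positive
`P`-number `r`. -/
def Xi (n : ℤ) (P : Set ℕ) : Set ℤ :=
  {s | 0 < s ∧ IsPInt P s ∧ ∃ r : ℤ, 0 < r ∧ IsPInt P r ∧ n ^ r.toNat ≡ 1 [ZMOD s]}

/-- `Ω(n,P)`: pairs `(r,s)` of positive `P`-numbers with `n ^ r ≡ 1 (mod s)`. -/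
def OmegaP (n : ℤ) (P : Set ℕ) : Set (ℤ × ℤ) :=
  {rs | 0 < rs.1 ∧ 0 < rs.2 ∧ IsPInt P rs.1 ∧ IsPInt P rs.2 ∧
    n ^ rs.1.toNat ≡ 1 [ZMOD rs.2]}

lemma toNat_mul_of_nonneg {r1 r2 : ℤ} (h1 : 0 ≤ r1) (h2 : 0 ≤ r2) :
    (r1 * r2).toNat = r1.toNat * r2.toNat := by
  lift r1 to ℕ using h1; lift r2 to ℕ using h2
  rw [← Nat.cast_mul, Int.toNat_natCast, Int.toNat_natCast, Int.toNat_natCast]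

lemma xi_lcm {n : ℤ} {P : Set ℕ} {s1 s2 : ℤ} (h1 : s1 ∈ Xi n P) (h2 : s2 ∈ Xi n P) :
    (Int.lcm s1 s2 : ℤ) ∈ Xi n P := by
  obtain ⟨hs1, hp1, r1, hr1, hpr1, hmod1⟩ := h1
  obtain ⟨hs2, hp2, r2, hr2, hpr2, hmod2⟩ := h2
  have hlne : Int.lcm s1 s2 ≠ 0 := by
    simp [Int.lcm, Nat.lcm_ne_zero, Int.natAbs_ne_zero, hs1.ne', hs2.ne']
  refine ⟨by exact_mod_cast Nat.pos_of_ne_zero hlne, ?_, r1 * r2, mul_pos hr1 hr2, ?_, ?_⟩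
  · intro p hp hdvd
    have hdvd2 : (p : ℤ) ∣ s1 * s2 :=
      hdvd.trans (Int.coe_lcm_dvd (dvd_mul_right _ _) (dvd_mul_left _ _))
    rcases (Nat.prime_iff_prime_int.mp hp).dvd_mul.mp hdvd2 with h | h
    · exact hp1 p hp h
    · exact hp2 p hp h
  · intro p hp hdvd
    rcases (Nat.prime_iff_prime_int.mp hp).dvd_mul.mp hdvd with h | h
    · exact hpr1 p hp h
    · exact hpr2 p hp h
  · rw [Int.modEq_iff_dvd]
    have e : (r1 * r2).toNat = r1.toNat * r2.toNat := toNat_mul_of_nonneg hr1.le hr2.le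
    have d1 : s1 ∣ 1 - n ^ (r1 * r2).toNat := by
      have := hmod1.pow r2.toNat
      rw [← pow_mul, one_pow] at this
      rw [e]; exact Int.modEq_iff_dvd.mp this
    have d2 : s2 ∣ 1 - n ^ (r1 * r2).toNat := by
      have := hmod2.pow r1.toNat
      rw [← pow_mul, one_pow, mul_comm] at this
      rw [e]; exact Int.modEq_iff_dvd.mp this
    exact Int.coe_lcm_dvd d1 d2

lemma xi_one {n : ℤ} {P : Set ℕ} {p : ℕ} (hp : p.Prime) (hpP : p ∈ P) : (1 : ℤ) ∈ Xi n P := by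
  refine ⟨one_pos, ?_, p, by exact_mod_cast hp.pos, ?_, Int.modEq_one⟩
  · intro q hq hdvd
    have := Int.le_of_dvd one_pos hdvd
    have := hq.two_le
    omega
  · intro q hq hdvd
    have : q ∣ p := by exact_mod_cast hdvd
    rwa [(Nat.prime_dvd_prime_iff_eq hq hp).mp this]

/-- if `|nᵘ - 1| ∉ Ξ(n,𝔓)` (with `u ≥ 2`, `|n| ≥ 2`), then there are `v, w`
witnessing the failure of the arithmetic separability condition. -/
theorem stmt16 (n : ℤ) (hn : 2 ≤ |n|) (P : Set ℕ) (hP : P.Nonempty)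
    (hPprime : ∀ p ∈ P, p.Prime) (u : ℤ) (hu : 2 ≤ u)
    (h : |n ^ u.toNat - 1| ∉ Xi n P) :
    ∃ v w : ℤ,
      (∀ x y : ℕ, ¬ (n ^ u.toNat - 1) ∣ (v * n ^ x - w * n ^ y)) ∧
      (∀ s ∈ Xi n P, ∃ x y : ℕ,
        (Int.gcd (n ^ u.toNat - 1) s : ℤ) ∣ (v * n ^ x - w * n ^ y)) := by
  classical
  obtain ⟨p, hpP⟩ := hP
  have hpprime := hPprime p hpP
  set m : ℤ := n ^ u.toNat - 1 with hmdef
  have hu2 : 2 ≤ u.toNat := by omega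
  have hm0 : m ≠ 0 := by
    intro hc
    have h1 : n ^ u.toNat = 1 := by omega
    have h2 : n.natAbs ^ u.toNat = 1 := by rw [← Int.natAbs_pow, h1]; rfl
    have hn2 : 2 ≤ n.natAbs := by
      rw [Int.abs_eq_natAbs] at hn; exact_mod_cast hn
    have h3 : 2 ^ u.toNat ≤ n.natAbs ^ u.toNat := Nat.pow_le_pow_left hn2 _
    have h4 : 4 ≤ 2 ^ u.toNat := by
      calc 4 = 2 ^ 2 := rfl
      _ ≤ 2 ^ u.toNat := Nat.pow_le_pow_right (by norm_num) hu2
    omega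
  have hMpos : 0 < m.natAbs := Int.natAbs_pos.mpr hm0
  have hcop : IsCoprime n m := by
    refine ⟨n ^ (u.toNat - 1), -1, ?_⟩
    have hsucc : u.toNat - 1 + 1 = u.toNat := by omega
    have : n ^ (u.toNat - 1) * n = n ^ u.toNat := by
      rw [← pow_succ, hsucc]
    rw [hmdef]
    linarith [this]
  set D : ℕ → Prop := fun g => ∃ s ∈ Xi n P, g = Int.gcd m s with hDdef
  have hgdvd : ∀ s : ℤ, Int.gcd m s ∣ m.natAbs := fun s => Nat.gcd_dvd_left _ _
  have hDle : ∀ g, D g → g ≤ m.natAbs := by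
    rintro g ⟨s, _, rfl⟩
    exact Nat.le_of_dvd hMpos (hgdvd s)
  set L : ℕ := Nat.findGreatest D m.natAbs with hLdef
  have hD1 : D (Int.gcd m 1) := ⟨1, xi_one hpprime hpP, rfl⟩
  have hDL : D L :=
    Nat.findGreatest_spec (hDle _ hD1) hD1
  obtain ⟨s0, hs0Xi, hLs0⟩ := hDL
  have hLpos : 0 < L := by
    rw [hLs0]
    rcases Nat.eq_zero_or_pos (Int.gcd m s0) with hc | hc
    · exact absurd ((Int.gcd_eq_zero_iff.mp hc).1) hm0
    · exact hc
  -- every gcd divides L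
  have key : ∀ s ∈ Xi n P, (Int.gcd m s : ℤ) ∣ (L : ℤ) := by
    intro s hs
    set t : ℤ := (Int.lcm s0 s : ℤ) with htdef
    have htXi : t ∈ Xi n P := xi_lcm hs0Xi hs
    have hg'D : D (Int.gcd m t) := ⟨t, htXi, rfl⟩
    have hg'le : Int.gcd m t ≤ L := Nat.le_findGreatest (hDle _ hg'D) hg'D
    have hLdvd : (L : ℤ) ∣ (Int.gcd m t : ℤ) := by
      rw [hLs0]
      exact Int.dvd_coe_gcd (Int.gcd_dvd_left _ _) ((Int.gcd_dvd_right _ _).trans (Int.dvd_lcm_left _ _))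
    have hg'pos : 0 < Int.gcd m t := by
      rcases Nat.eq_zero_or_pos (Int.gcd m t) with hc | hc
      · exact absurd ((Int.gcd_eq_zero_iff.mp hc).1) hm0
      · exact hc
    have hLdvdN : L ∣ Int.gcd m t := by exact_mod_cast hLdvd
    have : Int.gcd m t = L := le_antisymm hg'le (Nat.le_of_dvd hg'pos hLdvdN)
    rw [← this]
    exact Int.dvd_coe_gcd (Int.gcd_dvd_left _ _) ((Int.gcd_dvd_right _ _).trans (Int.dvd_lcm_right _ _))
  -- m does not divide L
  have hmndL : ¬ m ∣ (L : ℤ) := by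
    intro hc
    have h1 : m.natAbs ∣ L := by
      have := Int.natAbs_dvd_natAbs.mpr hc
      simpa using this
    have h2 : L ∣ m.natAbs := hLs0 ▸ hgdvd s0
    have hLM : L = m.natAbs := Nat.dvd_antisymm h2 h1
    -- then |m| = gcd m s0 divides s0, so |m| ∈ Xi
    have habs : (m.natAbs : ℤ) ∣ s0 := by
      rw [← hLM, hLs0]
      exact Int.gcd_dvd_right _ _
    obtain ⟨hs0pos, hs0P, r0, hr0pos, hr0P, hr0mod⟩ := hs0Xi
    apply h
    rw [Int.abs_eq_natAbs]
    refine ⟨by exact_mod_cast hMpos, ?_, r0, hr0pos, hr0P, hr0mod.of_dvd habs⟩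
    intro q hq hdvd
    exact hs0P q hq (hdvd.trans habs)
  refine ⟨(L : ℤ), 0, ?_, ?_⟩
  · intro x y hdvd
    rw [zero_mul, sub_zero] at hdvd
    have hcop2 : IsCoprime m (n ^ x) := (hcop.symm).pow_right
    exact hmndL (hcop2.dvd_of_dvd_mul_right hdvd)
  · intro s hs
    refine ⟨0, 0, ?_⟩
    simpa using key s hs
end

section
/- Let n ∈ ℤ with |n| ≥ 2, let p be a prime number, and let 𝔓 be a non-empty set of primes. If |n^{p²} − 1| ∈ Ξ(n,𝔓), then p ∈ 𝔓. -/
theorem Int.dvd_pow_gcd_sub_one {s n : ℤ} {a b : ℕ} (ha : s ∣ n ^ a - 1) (hb : s ∣ n ^ b - 1) :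
    s ∣ n ^ a.gcd b - 1 := by
  have key (k : ℕ) : s ∣ n ^ k - 1 ↔ (n : ZMod s.natAbs) ^ k = 1 := by
    rw [← Int.natAbs_dvd, ← ZMod.intCast_zmod_eq_zero_iff_dvd, Int.cast_sub, Int.cast_pow,
      Int.cast_one, sub_eq_zero]
  rw [key] at ha hb ⊢
  exact pow_gcd_eq_one.2 ⟨ha, hb⟩

theorem abs_pow_sub_one_lt_abs_pow_sub_one {R : Type*} [CommRing R] [LinearOrder R]
    [IsStrictOrderedRing R] {x : R} (hx : 2 ≤ |x|) {d k : ℕ} (hdk : d + 2 ≤ k) :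
    |x ^ d - 1| < |x ^ k - 1| := by
  have hd : 1 ≤ |x| ^ d := one_le_pow₀ (by linarith)
  calc |x ^ d - 1| ≤ |x| ^ d + 1 := by simpa [abs_pow] using abs_sub (x ^ d) 1
    _ < 2 ^ 2 * |x| ^ d - 1 := by linarith
    _ ≤ |x| ^ 2 * |x| ^ d - 1 := by gcongr
    _ ≤ |x| ^ k - 1 := by
        rw [← pow_add]
        gcongr
        · linarith
        · omega
    _ ≤ |x ^ k - 1| := by simpa [abs_pow] using abs_sub_abs_le_abs_sub (x ^ k) 1

theorem Int.prime_dvd_of_abs_pow_sq_sub_one_dvd {n : ℤ} (hn : 2 ≤ |n|) {p r : ℕ} (hp : p.Prime)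
    (h : |n ^ (p ^ 2) - 1| ∣ n ^ r - 1) : p ∣ r := by
  by_contra hpr
  have hcop : (p ^ 2).Coprime r := ((Nat.Prime.coprime_iff_not_dvd hp).2 hpr).pow_left 2
  have hdvd : |n ^ (p ^ 2) - 1| ∣ n ^ 1 - 1 := by
    simpa [hcop] using Int.dvd_pow_gcd_sub_one (abs_dvd_self _) h
  have hlt : |n ^ 1 - 1| < |n ^ (p ^ 2) - 1| :=
    abs_pow_sub_one_lt_abs_pow_sub_one hn (by nlinarith [hp.two_le])
  have hn1 : n = 1 := by simpa [sub_eq_zero] using Int.eq_zero_of_abs_lt_dvd hdvd hlt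
  simp [hn1] at hn

theorem stmt18_general (n : ℤ) (hn : 2 ≤ |n|) (p : ℕ) (hp : p.Prime) (P : Set ℕ)
    (h : |n ^ (p ^ 2) - 1| ∈ Xi n P) : p ∈ P := by
  obtain ⟨-, -, r, hr, hrP, hmod⟩ := h
  have hpr : p ∣ r.toNat := Int.prime_dvd_of_abs_pow_sq_sub_one_dvd hn hp hmod.symm.dvd
  exact hrP p hp (by simpa [Int.toNat_of_nonneg hr.le] using Int.natCast_dvd_natCast.2 hpr)

/-- if `|n ^ (p²) - 1| ∈ Ξ(n,𝔓)` with `|n| ≥ 2` and `p` prime, then `p ∈ 𝔓`. -/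
theorem stmt18 (n : ℤ) (hn : 2 ≤ |n|) (p : ℕ) (hp : p.Prime) (P : Set ℕ)
    (hP : P.Nonempty) (hPprime : ∀ q ∈ P, q.Prime)
    (h : |n ^ (p ^ 2) - 1| ∈ Xi n P) : p ∈ P :=
  stmt18_general n hn p hp P h
end

section
/- In the group BS(1,−1), for all u,v ∈ ℤ the following hold: the conjugacy class of the element t^u·a^v equals {t^u·a^v, t^u·a^{−v}} if u is even, and equals {t^u·a^{v+2k} : k ∈ ℤ} if u is odd. -/
namespace Stmt19Aux

local notation "τ" => BSt 1 (-1)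
local notation "α" => BSa 1 (-1)

/-- sign function -/
def ε (u : ℤ) : ℤ := if Even u then 1 else -1

lemma ε_even {u : ℤ} (h : Even u) : ε u = 1 := by simp [ε, h]
lemma ε_odd {u : ℤ} (h : Odd u) : ε u = -1 := by
  simp [ε, Int.not_even_iff_odd.2 h]

lemma ε_add (u v : ℤ) : ε (u + v) = ε u * ε v := by
  rcases Int.even_or_odd u with hu | hu <;> rcases Int.even_or_odd v with hv | hv
  · rw [ε_even hu, ε_even hv, ε_even (hu.add hv)]; ring
  · rw [ε_even hu, ε_odd hv, ε_odd (hu.add_odd hv)]; ring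
  · rw [ε_odd hu, ε_even hv, ε_odd (hu.add_even hv)]; ring
  · rw [ε_odd hu, ε_odd hv, ε_even (hu.add_odd hv)]; ring

lemma ε_neg (u : ℤ) : ε (-u) = ε u := by simp [ε]

lemma ε_zero : ε 0 = 1 := rfl
lemma ε_one : ε 1 = -1 := rfl

lemma ε_mul_self (u : ℤ) : ε u * ε u = 1 := by
  rcases Int.even_or_odd u with h | h
  · rw [ε_even h]; ring
  · rw [ε_odd h]; ring

lemma ε_cases (u : ℤ) : ε u = 1 ∨ ε u = -1 := by
  rcases Int.even_or_odd u with h | h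
  · exact Or.inl (ε_even h)
  · exact Or.inr (ε_odd h)

/-- The model group: `ℤ ⋊ ℤ` with negation action. -/
def GG : Type := ℤ × ℤ

def mkG (u v : ℤ) : GG := (u, v)

def gmul (x y : GG) : GG := mkG (x.1 + y.1) (ε y.1 * x.2 + y.2)
def ginv (x : GG) : GG := mkG (-x.1) (-(ε x.1 * x.2))

lemma mkG_fst (u v : ℤ) : (mkG u v).1 = u := rfl
lemma mkG_snd (u v : ℤ) : (mkG u v).2 = v := rfl

lemma mkG_ext {u v u' v' : ℤ} (h1 : u = u') (h2 : v = v') : mkG u v = mkG u' v' := by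
  rw [h1, h2]

lemma GG_ext (x : GG) : x = mkG x.1 x.2 := rfl

lemma mkG_eq {u v : ℤ} {x : GG} (h1 : u = x.1) (h2 : v = x.2) : mkG u v = x := by
  show ((u, v) : ℤ × ℤ) = x
  exact Prod.ext h1 h2

instance : Group GG where
  mul := gmul
  one := mkG 0 0
  inv := ginv
  mul_assoc x y z := by
    show gmul (gmul x y) z = gmul x (gmul y z)
    unfold gmul
    rw [mkG_fst, mkG_snd, mkG_fst, mkG_snd]
    exact mkG_ext (by ring) (by rw [ε_add]; ring)
  one_mul x := by
    show gmul (mkG 0 0) x = x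
    unfold gmul
    rw [mkG_fst, mkG_snd]
    exact mkG_eq (by ring) (by ring)
  mul_one x := by
    show gmul x (mkG 0 0) = x
    unfold gmul
    rw [mkG_fst, mkG_snd]
    exact mkG_eq (by ring) (by rw [ε_zero]; ring)
  inv_mul_cancel x := by
    show gmul (ginv x) x = mkG 0 0
    unfold gmul ginv
    rw [mkG_fst, mkG_snd]
    refine mkG_ext (by ring) ?_
    linear_combination -x.2 * ε_mul_self x.1

lemma GG.mul_def (x y : GG) : x * y = mkG (x.1 + y.1) (ε y.1 * x.2 + y.2) := rfl
lemma GG.inv_def (x : GG) : x⁻¹ = mkG (-x.1) (-(ε x.1 * x.2)) := rfl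
lemma GG.one_def : (1 : GG) = mkG 0 0 := rfl

def aG : GG := mkG 0 1
def tG : GG := mkG 1 0

lemma tG_zpow (n : ℤ) : tG ^ n = mkG n 0 := by
  induction n using Int.induction_on with
  | zero => rw [zpow_zero]; rfl
  | succ k ih =>
      rw [zpow_add_one, ih, GG.mul_def, mkG_fst, mkG_snd]
      exact mkG_ext rfl (by show ε (tG.1) * 0 + tG.2 = 0; rfl)
  | pred k ih =>
      rw [zpow_sub_one, ih, GG.mul_def, GG.inv_def, mkG_fst, mkG_snd, mkG_fst, mkG_snd]
      exact mkG_ext (by show -k + -tG.1 = -k - 1; rfl) (by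
        show ε (-tG.1) * 0 + -(ε tG.1 * tG.2) = 0
        show ε (-1) * 0 + -(ε 1 * 0) = 0
        ring)

lemma aG_zpow (n : ℤ) : aG ^ n = mkG 0 n := by
  induction n using Int.induction_on with
  | zero => rw [zpow_zero]; rfl
  | succ k ih =>
      rw [zpow_add_one, ih, GG.mul_def, mkG_fst, mkG_snd]
      refine mkG_ext (by show (0 : ℤ) + aG.1 = 0; rfl) ?_
      show ε aG.1 * k + aG.2 = k + 1
      show ε 0 * k + 1 = k + 1
      rw [ε_zero]; ring
  | pred k ih =>
      rw [zpow_sub_one, ih, GG.mul_def, GG.inv_def, mkG_fst, mkG_snd, mkG_fst, mkG_snd]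
      refine mkG_ext (by show (0 : ℤ) + -aG.1 = 0; rfl) ?_
      show ε (-aG.1) * (-k) + -(ε aG.1 * aG.2) = -k - 1
      show ε (-0) * (-k) + -(ε 0 * 1) = -k - 1
      rw [ε_neg, ε_zero]; ring

/-- The relator holds in `BS 1 (-1)`. -/
lemma brel : τ⁻¹ * α * τ * α = 1 := by
  have h : ((FreeGroup.of true)⁻¹ * (FreeGroup.of false) ^ (1 : ℤ) * FreeGroup.of true *
      (FreeGroup.of false) ^ (-(-1 : ℤ)) : FreeGroup Bool) ∈ BSrels 1 (-1) := rfl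
  have h2 : PresentedGroup.mk (BSrels 1 (-1)) ((FreeGroup.of true)⁻¹ *
      (FreeGroup.of false) ^ (1 : ℤ) * FreeGroup.of true *
      (FreeGroup.of false) ^ (-(-1 : ℤ))) = 1 :=
    (QuotientGroup.eq_one_iff _).mpr (Subgroup.subset_normalClosure h)
  have h3 : (τ⁻¹ * α ^ (1 : ℤ) * τ * α ^ (-(-1 : ℤ)) : BS 1 (-1)) = 1 := by
    simp only [map_mul, map_inv, map_zpow] at h2
    exact h2
  simpa using h3

lemma tat : τ⁻¹ * α * τ = α⁻¹ := mul_eq_one_iff_eq_inv.mp brel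

lemma tpow_a (q : ℤ) : τ⁻¹ * α ^ q * τ = α ^ (-q) := by
  have h : (τ⁻¹ * α * (τ⁻¹)⁻¹ : BS 1 (-1)) ^ q = τ⁻¹ * α ^ q * (τ⁻¹)⁻¹ := conj_zpow
  rw [inv_inv] at h
  rw [← h, tat, inv_zpow, ← zpow_neg]

lemma a_tinv (q : ℤ) : τ * α ^ q * τ⁻¹ = α ^ (-q) := by
  have h := tpow_a (-q)
  rw [neg_neg] at h
  rw [← h]
  group

/-- key commutation: `a^q t^u = t^u a^(ε u * q)` -/
lemma comm (u q : ℤ) : α ^ q * τ ^ u = τ ^ u * α ^ (ε u * q) := by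
  induction u using Int.induction_on with
  | zero => rw [ε_zero, one_mul]; simp
  | succ k ih =>
      have h1 : α ^ q * τ ^ ((k : ℤ) + 1) = τ ^ (k : ℤ) * (α ^ (ε k * q) * τ) := by
        rw [zpow_add_one, ← mul_assoc, ih]; group
      rw [h1]
      have h2 : α ^ (ε k * q) * τ = τ * α ^ (-(ε k * q)) := by
        have h3 := tpow_a (ε k * q)
        calc α ^ (ε k * q) * τ = τ * (τ⁻¹ * α ^ (ε k * q) * τ) := by group
        _ = τ * α ^ (-(ε k * q)) := by rw [h3]
      rw [h2, show ε ((k : ℤ) + 1) * q = -(ε k * q) by rw [ε_add, ε_one]; ring]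
      rw [zpow_add_one]
      group
  | pred k ih =>
      have h1 : α ^ q * τ ^ ((-k : ℤ) - 1) = τ ^ (-k : ℤ) * (α ^ (ε (-k) * q) * τ⁻¹) := by
        rw [zpow_sub_one, ← mul_assoc, ih]; group
      rw [h1]
      have h2 : α ^ (ε (-k) * q) * τ⁻¹ = τ⁻¹ * α ^ (-(ε (-k) * q)) := by
        have h3 := a_tinv (ε (-k) * q)
        calc α ^ (ε (-k) * q) * τ⁻¹ = τ⁻¹ * (τ * α ^ (ε (-k) * q) * τ⁻¹) := by group
        _ = τ⁻¹ * α ^ (-(ε (-k) * q)) := by rw [h3]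
      rw [h2, show ε ((-k : ℤ) - 1) * q = -(ε (-k) * q) by
        rw [sub_eq_add_neg, ε_add, show ε (-1) = -1 by rw [ε_neg, ε_one]]; ring]
      rw [zpow_sub_one]
      group

/-- the homomorphism `GG →* BS 1 (-1)` -/
def ψ : GG →* BS 1 (-1) :=
  MonoidHom.mk' (fun x : GG => τ ^ x.1 * α ^ x.2) (by
    intro x y
    rw [GG.mul_def]
    show τ ^ (x.1 + y.1) * α ^ (ε y.1 * x.2 + y.2) = _
    rw [zpow_add, zpow_add]
    have h := comm y.1 x.2
    calc τ ^ x.1 * τ ^ y.1 * (α ^ (ε y.1 * x.2) * α ^ y.2)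
        = τ ^ x.1 * (τ ^ y.1 * α ^ (ε y.1 * x.2)) * α ^ y.2 := by group
      _ = τ ^ x.1 * (α ^ x.2 * τ ^ y.1) * α ^ y.2 := by rw [← h]
      _ = τ ^ x.1 * α ^ x.2 * (τ ^ y.1 * α ^ y.2) := by group)

lemma ψ_apply (x : GG) : ψ x = τ ^ x.1 * α ^ x.2 := rfl

lemma ψ_mkG (p q : ℤ) : ψ (mkG p q) = τ ^ p * α ^ q := rfl

def ff : Bool → GG := fun b => if b then tG else aG

lemma GGrel : tG⁻¹ * aG * tG * aG = 1 := by
  rw [GG.inv_def, GG.mul_def, GG.mul_def, GG.mul_def, GG.one_def]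
  simp only [mkG_fst, mkG_snd]
  refine mkG_ext ?_ ?_
  · show -tG.1 + aG.1 + tG.1 + aG.1 = 0
    show (-1 : ℤ) + 0 + 1 + 0 = 0
    ring
  · show ε aG.1 * (ε tG.1 * (ε aG.1 * -(ε tG.1 * tG.2) + aG.2) + tG.2) + aG.2 = 0
    show ε 0 * (ε 1 * (ε 0 * -(ε 1 * 0) + 1) + 0) + 1 = 0
    rw [ε_zero, ε_one]; ring

lemma hff : ∀ r ∈ BSrels 1 (-1), FreeGroup.lift ff r = 1 := by
  intro r hr
  have hr' : r = (FreeGroup.of true)⁻¹ * (FreeGroup.of false) ^ (1 : ℤ) * FreeGroup.of true *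
      (FreeGroup.of false) ^ (-(-1 : ℤ)) := hr
  subst hr'
  simp only [map_mul, map_inv, map_zpow, FreeGroup.lift_apply_of]
  show (ff true)⁻¹ * (ff false) ^ (1 : ℤ) * ff true * (ff false) ^ (-(-1 : ℤ)) = 1
  have e1 : ff true = tG := rfl
  have e2 : ff false = aG := rfl
  rw [e1, e2, show (-(-1 : ℤ)) = 1 by ring]
  exact GGrel

/-- the homomorphism `BS 1 (-1) →* GG` -/
def φ : BS 1 (-1) →* GG := PresentedGroup.toGroup hff

lemma φa : φ α = aG := PresentedGroup.toGroup.of hff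
lemma φt : φ τ = tG := PresentedGroup.toGroup.of hff

lemma ψφ (x : BS 1 (-1)) : ψ (φ x) = x := by
  have h : (ψ.comp φ : BS 1 (-1) →* BS 1 (-1)) = MonoidHom.id _ := by
    apply PresentedGroup.ext
    intro b
    cases b
    · show ψ (φ α) = α
      rw [φa, ψ_apply]
      show τ ^ (aG.1) * α ^ (aG.2) = α
      show τ ^ (0 : ℤ) * α ^ (1 : ℤ) = α
      group
    · show ψ (φ τ) = τ
      rw [φt, ψ_apply]
      show τ ^ (tG.1) * α ^ (tG.2) = τ
      show τ ^ (1 : ℤ) * α ^ (0 : ℤ) = τ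
      group
  exact DFunLike.congr_fun h x

lemma φ_tu_av (u v : ℤ) : φ (τ ^ u * α ^ v) = mkG u v := by
  rw [map_mul, map_zpow, map_zpow, φa, φt, tG_zpow, aG_zpow, GG.mul_def]
  simp only [mkG_fst, mkG_snd]
  exact mkG_ext (by ring) (by rw [ε_zero]; ring)

/-- conjugates in GG -/
lemma GG_conj (c : GG) (u v : ℤ) :
    c * mkG u v * c⁻¹ = mkG u (ε c.1 * (ε u - 1) * c.2 + ε c.1 * v) := by
  rw [GG.inv_def, GG.mul_def, GG.mul_def]
  simp only [mkG_fst, mkG_snd]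
  refine mkG_ext (by ring) ?_
  rw [ε_neg]
  ring

theorem stmt19_aux (u v : ℤ) :
    (Even u →
      {x : BS 1 (-1) | IsConj (τ ^ u * α ^ v) x} =
        {τ ^ u * α ^ v, τ ^ u * α ^ (-v)}) ∧
    (Odd u →
      {x : BS 1 (-1) | IsConj (τ ^ u * α ^ v) x} =
        {x : BS 1 (-1) | ∃ k : ℤ, x = τ ^ u * α ^ (v + 2 * k)}) := by
  constructor
  · intro hu
    ext x
    simp only [Set.mem_setOf_eq, Set.mem_insert_iff, Set.mem_singleton_iff]
    constructor
    · rintro hc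
      rw [isConj_iff] at hc
      obtain ⟨c, hc⟩ := hc
      have hφ : φ x = mkG u (ε (φ c).1 * (ε u - 1) * (φ c).2 + ε (φ c).1 * v) := by
        rw [← hc, map_mul, map_mul, map_inv, φ_tu_av, GG_conj]
      have hx : x = τ ^ u * α ^ (ε (φ c).1 * (ε u - 1) * (φ c).2 + ε (φ c).1 * v) := by
        rw [← ψφ x, hφ, ψ_mkG]
      rw [ε_even hu] at hx
      rcases ε_cases (φ c).1 with h | h <;> rw [h] at hx
      · left
        rw [hx, show (1 : ℤ) * (1 - 1) * (φ c).2 + 1 * v = v by ring]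
      · right
        rw [hx, show (-1 : ℤ) * (1 - 1) * (φ c).2 + -1 * v = -v by ring]
    · rintro (h | h)
      · rw [h]
      · rw [h, isConj_iff]
        refine ⟨τ⁻¹, ?_⟩
        have h1 : τ⁻¹ * (τ ^ u * α ^ v) * τ⁻¹⁻¹ = τ ^ u * (τ⁻¹ * α ^ v * τ) := by group
        rw [h1, tpow_a]
  · intro hu
    ext x
    simp only [Set.mem_setOf_eq]
    constructor
    · rintro hc
      rw [isConj_iff] at hc
      obtain ⟨c, hc⟩ := hc
      have hφ : φ x = mkG u (ε (φ c).1 * (ε u - 1) * (φ c).2 + ε (φ c).1 * v) := by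
        rw [← hc, map_mul, map_mul, map_inv, φ_tu_av, GG_conj]
      have hx : x = τ ^ u * α ^ (ε (φ c).1 * (ε u - 1) * (φ c).2 + ε (φ c).1 * v) := by
        rw [← ψφ x, hφ, ψ_mkG]
      rw [ε_odd hu] at hx
      set w := ε (φ c).1 * (-1 - 1) * (φ c).2 + ε (φ c).1 * v with hw
      have hev : Even (w - v) := by
        rcases ε_cases (φ c).1 with h | h
        · exact ⟨-(φ c).2, by rw [hw, h]; ring⟩
        · exact ⟨(φ c).2 - v, by rw [hw, h]; ring⟩
      obtain ⟨k, hk⟩ := hev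
      exact ⟨k, by rw [hx, show v + 2 * k = w by omega]⟩
    · rintro ⟨k, hk⟩
      rw [hk, isConj_iff]
      refine ⟨α ^ (-k), ?_⟩
      have h1 : α ^ (-k) * (τ ^ u * α ^ v) * (α ^ (-k))⁻¹
          = (α ^ (-k) * τ ^ u) * (α ^ v * α ^ k) := by group
      rw [h1, comm u (-k), ε_odd hu]
      rw [show (-1 : ℤ) * (-k) = k by ring, ← zpow_add, mul_assoc, ← zpow_add]
      rw [show k + (v + k) = v + 2 * k by ring]

end Stmt19Aux

/-- the conjugacy class of `tᵘaᵛ` in `BS(1,-1)` is `{tᵘaᵛ, tᵘa⁻ᵛ}` when `u` is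
even, and `{tᵘa^(v+2k) : k ∈ ℤ}` when `u` is odd. -/
theorem stmt19 (u v : ℤ) :
    (Even u →
      {x : BS 1 (-1) | IsConj (BSt 1 (-1) ^ u * BSa 1 (-1) ^ v) x} =
        {BSt 1 (-1) ^ u * BSa 1 (-1) ^ v, BSt 1 (-1) ^ u * BSa 1 (-1) ^ (-v)}) ∧
    (Odd u →
      {x : BS 1 (-1) | IsConj (BSt 1 (-1) ^ u * BSa 1 (-1) ^ v) x} =
        {x : BS 1 (-1) | ∃ k : ℤ, x = BSt 1 (-1) ^ u * BSa 1 (-1) ^ (v + 2 * k)}) := by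
  exact Stmt19Aux.stmt19_aux u v
end
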